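/- Aspnes validity as safety: In the round-based register protocol modeling Aspnes' consensus algorithm with initial state A_0 (all processes prefer 0), the state R_1 (returning value 1) is not coverable: for every n ∈ ℕ, every concrete configuration reachable from the initial configuration with n processes, and every round k, no process occupies (R_1, k). -/
import Mathlib


/-!  The round-based register protocol modeling Aspnes' consensus algorithm.
Registers are boolean-valued (`false` = ⊥, `true` = ⊤); each round `k` has two
registers `reg_k^0` and `reg_k^1`, indexed by a boolean (the preference). -/

/-- Guards on the round number appearing on transitions of the protocol. -/
inductive AGuard where
  | any | zero | pos

/-- Actions: round increment, guarded read of value `x` from register `α` of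
round `k - i`, and write of value `x` to register `α` of the current round. -/
inductive AAct where
  | incr : AAct
  | read (g : AGuard) (i : ℕ) (α : Bool) (x : Bool) : AAct
  | write (α : Bool) (x : Bool) : AAct

/-- States of Aspnes' protocol, indexed by the current preference `p`. -/
inductive AQ where
  | A (p : Bool) | B (p : Bool) | C (p : Bool)
  | D (p : Bool) | E (p : Bool) | R (p : Bool)
deriving DecidableEq

/-- Satisfaction of a round guard. -/
def AGuard.holds : AGuard → ℕ → Prop
  | .any, _ => True
  | .zero, k => k = 0
  | .pos, k => 0 < k

/-- Transitions of Aspnes' protocol. -/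
inductive AspT : AQ → AAct → AQ → Prop where
  | readSameTop (p : Bool) : AspT (.A p) (.read .any 0 p true) (.C p)
  | readSameBlank (p : Bool) : AspT (.A p) (.read .any 0 p false) (.B p)
  | readOtherBlank (p : Bool) : AspT (.B p) (.read .any 0 (!p) false) (.C p)
  | readOtherTop (p : Bool) : AspT (.B p) (.read .any 0 (!p) true) (.C (!p))
  | writePref (p : Bool) : AspT (.C p) (.write p true) (.D p)
  | roundZeroNext (p : Bool) : AspT (.D p) (.read .zero 1 (!p) false) (.E p)
  | readPrevTop (p : Bool) : AspT (.D p) (.read .pos 1 (!p) true) (.E p)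
  | decide (p : Bool) : AspT (.D p) (.read .pos 1 (!p) false) (.R p)
  | next (p : Bool) : AspT (.E p) .incr (.A p)

/-- A concrete configuration of Aspnes' protocol. -/
structure AConc where
  loc : (AQ × ℕ) →₀ ℕ
  reg : ℕ → Bool → Bool

/-- Concrete step relation of Aspnes' protocol. -/
inductive AspStep : AConc → AConc → Prop where
  | incr {q q' : AQ} {k : ℕ} {γ γ' : AConc} :
      AspT q .incr q' → 0 < γ.loc (q, k) →
      γ'.loc = γ.loc - Finsupp.single (q, k) 1 + Finsupp.single (q', k + 1) 1 →
      γ'.reg = γ.reg →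
      AspStep γ γ'
  | read {q q' : AQ} {g : AGuard} {i k : ℕ} {α x : Bool} {γ γ' : AConc} :
      AspT q (.read g i α x) q' → 0 < γ.loc (q, k) → g.holds k →
      (if i ≤ k then γ.reg (k - i) α else false) = x →
      γ'.loc = γ.loc - Finsupp.single (q, k) 1 + Finsupp.single (q', k) 1 →
      γ'.reg = γ.reg →
      AspStep γ γ'
  | write {q q' : AQ} {k : ℕ} {α x : Bool} {γ γ' : AConc} :
      AspT q (.write α x) q' → 0 < γ.loc (q, k) →
      γ'.loc = γ.loc - Finsupp.single (q, k) 1 + Finsupp.single (q', k) 1 →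
      γ'.reg = (fun k' α' => if k' = k ∧ α' = α then x else γ.reg k' α') →
      AspStep γ γ'

/-- Concrete reachability. -/
def AspReach : AConc → AConc → Prop := Relation.ReflTransGen AspStep

/-- Initial configuration with `n` processes, all in state `A_0` (preference 0)
at round `0`, and all registers holding `⊥`. -/
noncomputable def AspInit (n : ℕ) : AConc :=
  ⟨Finsupp.single (AQ.A false, 0) n, fun _ _ => false⟩

def APref : AQ → Bool
  | .A p => p | .B p => p | .C p => p | .D p => p | .E p => p | .R p => p

def AInv (γ : AConc) : Prop :=
  (∀ k, γ.reg k true = false) ∧ (∀ q k, APref q = true → γ.loc (q, k) = 0)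

lemma loc_upd_zero {f : (AQ × ℕ) →₀ ℕ} {qa qb q' : AQ} {k k' : ℕ}
    (h : ∀ k'', f (q', k'') = 0) (ha : APref qa = false) (hb : APref qb = false)
    (hP : APref q' = true) :
    ∀ k'', (f - Finsupp.single (qa, k) 1 + Finsupp.single (qb, k') 1 : (AQ × ℕ) →₀ ℕ) (q', k'') = 0 := by
  intro k''
  have hqa : qa ≠ q' := by intro h'; subst h'; rw [ha] at hP; cases hP
  have hqb : qb ≠ q' := by intro h'; subst h'; rw [hb] at hP; cases hP
  simp [Finsupp.add_apply, Finsupp.tsub_apply, Finsupp.single_apply, h, hqa, hqb,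
    Prod.ext_iff, fun h' : qa = q' => hqa h', fun h' : qb = q' => hqb h']

lemma ainv_step {γ γ' : AConc} (h : AspStep γ γ') (hinv : AInv γ) : AInv γ' := by
  obtain ⟨hreg, hloc⟩ := hinv
  cases h with
  | incr ht hpos hl hr =>
    rename_i q q' k
    cases ht with
    | next p =>
      cases p with
      | true => simp [hloc (AQ.E true) k rfl] at hpos
      | false =>
        refine ⟨by simp [hr, hreg], fun q2 k2 hP => ?_⟩
        rw [hl]; apply loc_upd_zero (fun k'' => hloc _ _ hP) (by rfl) (by rfl) hP
  | read ht hpos hg hread hl hr =>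
    rename_i q q' g i k α x
    have hreg' : ∀ k2, γ'.reg k2 true = false := by simp [hr, hreg]
    refine ⟨hreg', fun q2 k2 hP => ?_⟩
    cases ht with
    | readSameTop p =>
      cases α with
      | true => simp [hloc (AQ.A true) k rfl] at hpos
      | false =>
        rw [hl]; apply loc_upd_zero (fun k'' => hloc _ _ hP) (by rfl) (by rfl) hP
    | readSameBlank p =>
      cases α with
      | true => simp [hloc (AQ.A true) k rfl] at hpos
      | false =>
        rw [hl]; apply loc_upd_zero (fun k'' => hloc _ _ hP) (by rfl) (by rfl) hP
    | readOtherBlank p =>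
      cases p with
      | true => simp [hloc (AQ.B true) k rfl] at hpos
      | false =>
        rw [hl]; apply loc_upd_zero (fun k'' => hloc _ _ hP) (by rfl) (by rfl) hP
    | readOtherTop p =>
      cases p with
      | true => simp [hloc (AQ.B true) k rfl] at hpos
      | false => simp [hreg] at hread
    | roundZeroNext p =>
      cases p with
      | true => simp [hloc (AQ.D true) k rfl] at hpos
      | false =>
        rw [hl]; apply loc_upd_zero (fun k'' => hloc _ _ hP) (by rfl) (by rfl) hP
    | readPrevTop p =>
      cases p with
      | true => simp [hloc (AQ.D true) k rfl] at hpos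
      | false =>
        rw [hl]; apply loc_upd_zero (fun k'' => hloc _ _ hP) (by rfl) (by rfl) hP
    | decide p =>
      cases p with
      | true => simp [hloc (AQ.D true) k rfl] at hpos
      | false =>
        rw [hl]; apply loc_upd_zero (fun k'' => hloc _ _ hP) (by rfl) (by rfl) hP
  | write ht hpos hl hr =>
    rename_i q q' k α x
    cases ht with
    | writePref p =>
      cases α with
      | true => simp [hloc (AQ.C true) k rfl] at hpos
      | false =>
        refine ⟨fun k2 => by simp [hr, hreg], fun q2 k2 hP => ?_⟩
        rw [hl]; apply loc_upd_zero (fun k'' => hloc _ _ hP) (by rfl) (by rfl) hP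

lemma ainv_reach {n : ℕ} {γ : AConc} (h : AspReach (AspInit n) γ) : AInv γ := by
  induction h with
  | refl =>
    refine ⟨fun k => rfl, fun q k hP => ?_⟩
    simp [AspInit, Finsupp.single_apply, Prod.ext_iff]
    rintro rfl
    simp [APref] at hP
  | tail _ hstep ih => exact ainv_step hstep ih

/-- Validity of Aspnes' algorithm as a safety property: if all processes start
with preference `0`, no process ever reaches the decision state `R_1`. -/
theorem aspnes_validity (n : ℕ) (γ : AConc) (hreach : AspReach (AspInit n) γ)
    (k : ℕ) : γ.loc (AQ.R true, k) = 0 := by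
  exact (ainv_reach hreach).2 _ k rfl
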